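/- Define the top-down odometer O_1 on finite words by O_1(w_1, w_2, …, w_j) = (1, …, 1 (w_1 − 1 times), w_2 + 1, w_3, …, w_j) for j > 1, and O_1(w_1) = (1, 1, …, 1) ((w_1 + 1) times) for words of length one. Then the map n ↦ O_1^n((1)) is a bijection between ℕ ∪ {0} and Ω_1: the orbit of the word (1) under O_1 passes through every finite word exactly once, and it does so following the reverse lexicographic order <_{Ω_1}. -/

import Mathlib

/-- To a finite word `ω = (w₁, …, w_j)` (a list, head = `w₁`) associate the
nonnegative integer `n_ω` whose binary expansion is the concatenation of the
blocks `b̂_{w_j−1} b̂_{w_{j−1}−1} ⋯ b̂_{w_1−1}`, where `b̂_k` is a `0` followed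
by `k` ones.  Appending the block `b̂_k` on the right of a numeral of value `v`
yields `v * 2^(k+1) + (2^k − 1)`. -/
def wordVal (ω : List ℕ) : ℕ :=
  ω.reverse.foldl (fun v w => v * 2 ^ w + (2 ^ (w - 1) - 1)) 0

/-- The reverse lexicographic order `<_{Ω₁}` on finite words: first compare the
sums of the letters; for equal sums, compare the letters from the right,
lexicographically at the first position (from the right) where they differ. -/
def revLexLt (a b : List ℕ) : Prop :=
  a.sum < b.sum ∨
    (a.sum = b.sum ∧ ∃ t : ℕ, t < a.length ∧ t < b.length ∧
      a.reverse.take t = b.reverse.take t ∧ a.reverse.getD t 0 < b.reverse.getD t 0)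

/-- The top-down odometer on finite words: for words of length `> 1`,
`O₁(w₁, w₂, …, w_j) = (1,…,1 (w₁−1 times), w₂+1, w₃, …, w_j)`, and for words of
length one, `O₁(w₁) = (1,…,1) ((w₁+1) times)`. -/
def topDownOdometer : List ℕ → List ℕ
  | [] => []
  | [w] => List.replicate (w + 1) 1
  | w₁ :: w₂ :: rest => List.replicate (w₁ - 1) 1 ++ (w₂ + 1) :: rest

namespace OdomAux

lemma foldl_replicate_one (x a : ℕ) :
    (List.replicate a 1).foldl (fun v w => v * 2 ^ w + (2 ^ (w - 1) - 1)) x = x * 2 ^ a := by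
  induction a generalizing x with
  | zero => simp
  | succ n ih =>
    rw [List.replicate_succ, List.foldl_cons, ih]
    simp [pow_succ]
    ring

lemma wordVal_cons (h : ℕ) (rest : List ℕ) :
    wordVal (h :: rest) = wordVal rest * 2 ^ h + (2 ^ (h - 1) - 1) := by
  simp [wordVal, List.foldl_append]

lemma wordVal_decomp (a h : ℕ) (rest : List ℕ) :
    wordVal (List.replicate a 1 ++ h :: rest) =
      (wordVal rest * 2 ^ h + (2 ^ (h - 1) - 1)) * 2 ^ a := by
  simp [wordVal, List.reverse_append, List.foldl_append, List.reverse_replicate,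
    foldl_replicate_one]

lemma wordVal_replicate_one (m : ℕ) : wordVal (List.replicate m 1) = 0 := by
  simp [wordVal, List.reverse_replicate, foldl_replicate_one]

lemma key (a h : ℕ) (rest : List ℕ) (hh : 2 ≤ h) :
    wordVal (List.replicate a 1 ++ h :: rest) =
      wordVal ((a + 1) :: (h - 1) :: rest) + 1 := by
  obtain ⟨h', rfl⟩ : ∃ h', h = h' + 2 := ⟨h - 2, by omega⟩
  rw [wordVal_decomp, wordVal_cons, wordVal_cons]
  set v := wordVal rest with hv
  have e1 : 2 ^ (h' + 2) = 4 * 2 ^ h' := by ring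
  have e2 : 2 ^ (h' + 2 - 1) = 2 * 2 ^ h' := by
    rw [show h' + 2 - 1 = h' + 1 from rfl]; ring
  have e3 : 2 ^ (h' + 2 - 1 - 1) = 2 ^ h' := by norm_num
  have e4 : 2 ^ (a + 1) = 2 * 2 ^ a := by ring
  have e5 : 2 ^ (a + 1 - 1) = 2 ^ a := by norm_num
  rw [e1, e2, e3, e4, e5]
  have hB : 1 ≤ 2 ^ h' := Nat.one_le_two_pow
  have hA : 1 ≤ 2 ^ a := Nat.one_le_two_pow
  set B := 2 ^ h'
  set A := 2 ^ a
  have h1 : 1 ≤ 2 * B := by omega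
  zify [hA, hB, h1]
  ring


lemma valid_odometer {ω : List ℕ} (hne : ω ≠ []) (hpos : ∀ x ∈ ω, 1 ≤ x) :
    topDownOdometer ω ≠ [] ∧ ∀ x ∈ topDownOdometer ω, 1 ≤ x := by
  match ω with
  | [] => exact absurd rfl hne
  | [w] =>
    refine ⟨by simp [topDownOdometer], ?_⟩
    intro x hx
    rw [topDownOdometer] at hx
    rw [List.eq_of_mem_replicate hx]
  | w₁ :: w₂ :: rest =>
    rw [topDownOdometer]
    constructor
    · simp
    · intro x hx
      rcases List.mem_append.1 hx with hx | hx
      · rw [List.eq_of_mem_replicate hx]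
      · rcases List.mem_cons.1 hx with rfl | hx
        · omega
        · exact hpos x (by simp [hx])

lemma decomp (ω : List ℕ) (hne : ω ≠ []) (hpos : ∀ x ∈ ω, 1 ≤ x) :
    (ω = List.replicate ω.length 1) ∨
    ∃ a h rest, 2 ≤ h ∧ ω = List.replicate a 1 ++ h :: rest := by
  induction ω with
  | nil => exact absurd rfl hne
  | cons x xs ih =>
    rcases Nat.lt_or_ge x 2 with hx | hx
    · have hx1 : x = 1 := by have := hpos x (by simp); omega
      subst hx1
      by_cases hxs : xs = []
      · subst hxs; left; simp
      · rcases ih hxs (fun y hy => hpos y (by simp [hy])) with h1 | ⟨a, h, rest, hh, h2⟩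
        · left; rw [List.length_cons, List.replicate_succ]
          exact congrArg (1 :: ·) h1
        · right; exact ⟨a + 1, h, rest, hh, by rw [List.replicate_succ]; simp [h2]⟩
    · right; exact ⟨0, x, xs, hx, by simp⟩

lemma exists_orbit : ∀ k : ℕ, ∀ ω : List ℕ, ω ≠ [] → (∀ x ∈ ω, 1 ≤ x) →
    2 ^ ω.sum + wordVal ω = k → ∃ n, topDownOdometer^[n] [1] = ω := by
  intro k
  induction k using Nat.strong_induction_on with
  | _ k ih =>
    intro ω hne hpos hk
    rcases decomp ω hne hpos with hrep | ⟨a, h, rest, hh, rfl⟩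
    · obtain ⟨m, hm1, rfl⟩ : ∃ m, 1 ≤ m ∧ ω = List.replicate m 1 := by
        refine ⟨ω.length, ?_, hrep⟩
        rcases ω with _ | ⟨y, ys⟩
        · exact absurd rfl hne
        · simp
      have hsum : (List.replicate m 1).sum = m := by simp
      have hwv : wordVal (List.replicate m 1) = 0 := wordVal_replicate_one m
      have hk' : 2 ^ m = k := by rw [hsum, hwv] at hk; omega
      rcases Nat.lt_or_ge m 2 with hm2 | hm2
      · have : m = 1 := by omega
        subst this
        exact ⟨0, rfl⟩
      · -- pred = [m-1]
        have hsum' : ([m - 1] : List ℕ).sum = m - 1 := by simp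
        have hwv' : wordVal [m - 1] = 2 ^ (m - 1 - 1) - 1 := by
          rw [wordVal_cons]; simp [wordVal]
        have hlt : 2 ^ ([m-1] : List ℕ).sum + wordVal [m - 1] < k := by
          rw [hsum', hwv']
          have : 2 ^ (m - 1) + (2 ^ (m - 1 - 1) - 1) < 2 ^ m := by
            obtain ⟨m', rfl⟩ : ∃ m', m = m' + 2 := ⟨m - 2, by omega⟩
            have hB : 1 ≤ 2 ^ m' := Nat.one_le_two_pow
            simp only [show m' + 2 - 1 = m' + 1 from rfl, Nat.add_sub_cancel,
              pow_succ]
            omega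
          omega
        obtain ⟨n, hn⟩ := ih _ hlt [m - 1] (by simp) (by intro x hx; simp at hx; omega) rfl
        refine ⟨n + 1, ?_⟩
        rw [Function.iterate_succ_apply', hn]
        rw [topDownOdometer]
        congr 1
        omega
    · -- ω = replicate a 1 ++ h :: rest, h ≥ 2; pred = (a+1) :: (h-1) :: rest
      have hrpos : ∀ x ∈ rest, 1 ≤ x := fun x hx => hpos x (by simp [hx])
      have hsum : ((a + 1) :: (h - 1) :: rest).sum
          = (List.replicate a 1 ++ h :: rest).sum := by
        simp [List.sum_append]
        omega
      have hwv := key a h rest hh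
      have hlt : 2 ^ ((a + 1) :: (h - 1) :: rest).sum + wordVal ((a + 1) :: (h - 1) :: rest) < k := by
        rw [hsum]
        omega
      obtain ⟨n, hn⟩ := ih _ hlt ((a + 1) :: (h - 1) :: rest) (by simp)
        (by
          intro x hx
          rcases List.mem_cons.1 hx with rfl | hx
          · omega
          · rcases List.mem_cons.1 hx with rfl | hx
            · omega
            · exact hrpos x hx) rfl
      refine ⟨n + 1, ?_⟩
      rw [Function.iterate_succ_apply', hn, topDownOdometer]
      congr 2 <;> omega


lemma revLexLt_irrefl (a : List ℕ) : ¬ revLexLt a a := by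
  rintro (h | ⟨-, t, -, -, -, h⟩)
  · exact lt_irrefl _ h
  · exact lt_irrefl _ h

lemma getD_eq_of_take_eq {a b : List ℕ} {t t' : ℕ} (h : a.take t = b.take t)
    (ht : t' < t) : a.getD t' 0 = b.getD t' 0 := by
  rw [List.getD_eq_getElem?_getD, List.getD_eq_getElem?_getD]
  have ha : (a.take t)[t']? = a[t']? := by rw [List.getElem?_take]; simp [ht]
  have hb : (b.take t)[t']? = b[t']? := by rw [List.getElem?_take]; simp [ht]
  rw [← ha, ← hb, h]

lemma take_eq_of_take_eq {a b : List ℕ} {t t' : ℕ} (h : a.take t = b.take t)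
    (ht : t' ≤ t) : a.take t' = b.take t' := by
  have ha : a.take t' = (a.take t).take t' := by
    rw [List.take_take, Nat.min_eq_left ht]
  have hb : b.take t' = (b.take t).take t' := by
    rw [List.take_take, Nat.min_eq_left ht]
  rw [ha, hb, h]

lemma revLexLt_trans {a b c : List ℕ} (hab : revLexLt a b) (hbc : revLexLt b c) :
    revLexLt a c := by
  rcases hab with hab | ⟨hsab, t₁, ht₁a, ht₁b, htk₁, hg₁⟩
  · rcases hbc with hbc | ⟨hsbc, -⟩
    · exact Or.inl (hab.trans hbc)
    · exact Or.inl (hsbc ▸ hab)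
  · rcases hbc with hbc | ⟨hsbc, t₂, ht₂b, ht₂c, htk₂, hg₂⟩
    · exact Or.inl (hsab ▸ hbc)
    · right
      refine ⟨hsab.trans hsbc, ?_⟩
      rcases lt_trichotomy t₁ t₂ with h12 | rfl | h21
      · refine ⟨t₁, ht₁a, h12.trans ht₂c, ?_, ?_⟩
        · exact htk₁.trans (take_eq_of_take_eq htk₂ h12.le)
        · rw [← getD_eq_of_take_eq htk₂ h12]; exact hg₁
      · exact ⟨t₁, ht₁a, ht₂c, htk₁.trans htk₂, hg₁.trans hg₂⟩
      · refine ⟨t₂, h21.trans ht₁a, ht₂c, ?_, ?_⟩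
        · exact (take_eq_of_take_eq htk₁ h21.le).trans htk₂
        · rw [getD_eq_of_take_eq htk₁ h21]; exact hg₂

lemma revLexLt_step (ω : List ℕ) (hne : ω ≠ []) (hpos : ∀ x ∈ ω, 1 ≤ x) :
    revLexLt ω (topDownOdometer ω) := by
  match ω with
  | [] => exact absurd rfl hne
  | [w] =>
    left
    rw [topDownOdometer]
    simp
  | w₁ :: w₂ :: rest =>
    right
    rw [topDownOdometer]
    have hw₁ : 1 ≤ w₁ := hpos w₁ (by simp)
    constructor
    · simp [List.sum_append]
      omega
    · refine ⟨rest.length, by simp, ?_, ?_, ?_⟩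
      · simp
        omega
      · have h1 : (w₁ :: w₂ :: rest).reverse = rest.reverse ++ [w₂, w₁] := by simp
        have h2 : (List.replicate (w₁ - 1) 1 ++ (w₂ + 1) :: rest).reverse
            = rest.reverse ++ (w₂ + 1) :: List.replicate (w₁ - 1) 1 := by
          simp [List.reverse_append, List.reverse_replicate]
        rw [h1, h2, List.take_left' (by simp), List.take_left' (by simp)]
      · have h1 : (w₁ :: w₂ :: rest).reverse = rest.reverse ++ [w₂, w₁] := by simp
        have h2 : (List.replicate (w₁ - 1) 1 ++ (w₂ + 1) :: rest).reverse
            = rest.reverse ++ (w₂ + 1) :: List.replicate (w₁ - 1) 1 := by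
          simp [List.reverse_append, List.reverse_replicate]
        rw [h1, h2, List.getD_append_right _ _ _ _ (by simp),
          List.getD_append_right _ _ _ _ (by simp)]
        simp

lemma valid_iterate (n : ℕ) :
    topDownOdometer^[n] [1] ≠ [] ∧ ∀ x ∈ topDownOdometer^[n] [1], 1 ≤ x := by
  induction n with
  | zero => simp
  | succ n ih =>
    rw [Function.iterate_succ_apply']
    exact valid_odometer ih.1 ih.2

lemma orbit_lt {m n : ℕ} (h : m < n) :
    revLexLt (topDownOdometer^[m] [1]) (topDownOdometer^[n] [1]) := by
  induction n with
  | zero => omega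
  | succ n ih =>
    have step : revLexLt (topDownOdometer^[n] [1]) (topDownOdometer^[n + 1] [1]) := by
      rw [Function.iterate_succ_apply']
      exact revLexLt_step _ (valid_iterate n).1 (valid_iterate n).2
    rcases Nat.lt_or_ge m n with hmn | hmn
    · exact revLexLt_trans (ih hmn) step
    · have : m = n := by omega
      subst this
      exact step

end OdomAux

/-- Counting finite words: the map `n ↦ O₁ⁿ((1))` is a bijection between
`ℕ ∪ {0}` and the set `Ω₁` of finite nonempty words with letters in
`{1, 2, 3, …}`, and the orbit follows the reverse lexicographic order. -/
theorem topDownOdometer_counts_words :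
    (Function.Injective fun n : ℕ => (topDownOdometer)^[n] [1]) ∧
      (Set.range (fun n : ℕ => (topDownOdometer)^[n] [1]) =
        {ω : List ℕ | ω ≠ [] ∧ ∀ x ∈ ω, 1 ≤ x}) ∧
      (∀ m n : ℕ, m < n →
        revLexLt ((topDownOdometer)^[m] [1]) ((topDownOdometer)^[n] [1])) := by
  refine ⟨?_, ?_, fun m n h => OdomAux.orbit_lt h⟩
  · intro m n hmn
    simp only at hmn
    by_contra hne
    rcases lt_trichotomy m n with h | h | h
    · exact OdomAux.revLexLt_irrefl _ (hmn ▸ OdomAux.orbit_lt h)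
    · exact hne h
    · exact OdomAux.revLexLt_irrefl _ (hmn ▸ OdomAux.orbit_lt h)
  · ext ω
    simp only [Set.mem_range, Set.mem_setOf_eq]
    constructor
    · rintro ⟨n, rfl⟩
      exact OdomAux.valid_iterate n
    · rintro ⟨hne, hpos⟩
      exact OdomAux.exists_orbit _ ω hne hpos rfl
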